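/- arXiv:1806.11385 — 2 statements merged into one kernel-verified Lean document; each statement's English description precedes it below -/
import Mathlib

section
/- (Theorem 4.2, twisted cocycle part.) Let 𝒢 ≤ E(d) with translation lattice Π, point group G, section s̃, ν(g,h) := s̃(g) + g·s̃(h) − s̃(gh) ∈ Π, characters Π̂ with dual G-action, dual cocycle τ_𝒢, and the maps n·(x,χ,z) := (x+n, χ, χ(n)·z) and γ̃(g)(x,χ,z) := (s̃(g) + g·x, g·χ, z) on ℝ^d × Π̂ × ℂ. Then for all g, h ∈ G and all (x,χ,z) ∈ ℝ^d × Π̂ × ℂ: γ̃(g)(γ̃(h)(x,χ,z)) = ν(g,h)·( γ̃(gh)(x, χ, τ_𝒢(g,h)(χ)⁻¹ · z) ). In other words, the maps γ̃ descend to maps γ(g) of the Poincaré line bundle 𝒫 = (ℝ^d × Π̂ × ℂ)/Π satisfying γ(g)∘γ(h) = τ_𝒢(g,h)⁻¹ · γ(gh), i.e. they define a G-action twisted by (the pullback of) the inverse dual cocycle τ_𝒢⁻¹. -/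
noncomputable section

namespace Cryst

/-- `ℝ^d`. -/
abbrev Vec (d : ℕ) := EuclideanSpace ℝ (Fin d)

/-- The orthogonal group `O(d)`, realized as the group of linear isometries of `ℝ^d`. -/
abbrev Orth (d : ℕ) := Vec d ≃ₗᵢ[ℝ] Vec d

/-- The Euclidean group `E(d) = ℝ^d ⋊ O(d)`: pairs `(a, g)` with the semidirect
product multiplication `(a,g)(b,h) = (a + g·b, g*h)`. -/
@[ext] structure Euc (d : ℕ) where
  t : Vec d
  g : Orth d

namespace Euc

variable {d : ℕ}

instance : Group (Euc d) where
  mul p q := ⟨p.t + p.g q.t, p.g * q.g⟩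
  one := ⟨0, 1⟩
  inv p := ⟨-(p.g⁻¹ p.t), p.g⁻¹⟩
  mul_assoc p q r := by
    ext : 1
    · show (p.t + p.g q.t) + (p.g * q.g) r.t = p.t + p.g (q.t + q.g r.t)
      simp [add_assoc]
    · show (p.g * q.g) * r.g = p.g * (q.g * r.g)
      rw [mul_assoc]
  one_mul p := by
    ext : 1
    · show (0 : Vec d) + (1 : Orth d) p.t = p.t
      simp
    · show 1 * p.g = p.g
      rw [one_mul]
  mul_one p := by
    ext : 1
    · show p.t + p.g 0 = p.t
      simp
    · show p.g * 1 = p.g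
      rw [mul_one]
  inv_mul_cancel p := by
    ext : 1
    · show -(p.g⁻¹ p.t) + p.g⁻¹ p.t = (0 : Vec d)
      simp
    · show p.g⁻¹ * p.g = 1
      rw [inv_mul_cancel]

@[simp] theorem mul_t (p q : Euc d) : (p * q).t = p.t + p.g q.t := rfl
@[simp] theorem mul_g (p q : Euc d) : (p * q).g = p.g * q.g := rfl
@[simp] theorem one_t : (1 : Euc d).t = 0 := rfl
@[simp] theorem one_g : (1 : Euc d).g = 1 := rfl
@[simp] theorem inv_t (p : Euc d) : p⁻¹.t = -(p.g⁻¹ p.t) := rfl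
@[simp] theorem inv_g (p : Euc d) : p⁻¹.g = p.g⁻¹ := rfl

end Euc

variable {d : ℕ}

/-- The projection `E(d) → O(d)`, `(a,g) ↦ g`. -/
def proj (d : ℕ) : Euc d →* Orth d where
  toFun := Euc.g
  map_one' := rfl
  map_mul' _ _ := rfl

@[simp] theorem proj_apply (p : Euc d) : proj d p = p.g := rfl

variable (𝒢 : Subgroup (Euc d))

/-- The translation lattice `Π = {v : (v,1) ∈ 𝒢}` of a subgroup `𝒢 ≤ E(d)`. -/
def lat : AddSubgroup (Vec d) where
  carrier := {v | (⟨v, 1⟩ : Euc d) ∈ 𝒢}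
  zero_mem' := by
    have : ((1 : Euc d) ∈ 𝒢) := one_mem 𝒢
    exact this
  add_mem' := by
    intro a b ha hb
    have ha' : (⟨a,1⟩ : Euc d) ∈ 𝒢 := ha
    have hb' : (⟨b,1⟩ : Euc d) ∈ 𝒢 := hb
    have h := mul_mem ha' hb'
    have e : (⟨a,1⟩ : Euc d) * ⟨b,1⟩ = ⟨a + b, 1⟩ := by
      ext : 1 <;> simp
    rwa [e] at h
  neg_mem' := by
    intro a ha
    have ha' : (⟨a,1⟩ : Euc d) ∈ 𝒢 := ha
    have h := inv_mem ha'
    have e : (⟨a,1⟩ : Euc d)⁻¹ = ⟨-a, 1⟩ := by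
      ext : 1 <;> simp
    rwa [e] at h

@[simp] theorem mem_lat (v : Vec d) : v ∈ lat 𝒢 ↔ (⟨v, 1⟩ : Euc d) ∈ 𝒢 := Iff.rfl

/-- The point group `G ≤ O(d)`: the image of `𝒢` under the projection `(a,g) ↦ g`. -/
def ptGrp : Subgroup (Orth d) := 𝒢.map (proj d)

theorem g_mem_ptGrp {p : Euc d} (hp : p ∈ 𝒢) : p.g ∈ ptGrp 𝒢 := ⟨p, hp, rfl⟩

/-- The point group preserves the translation lattice. -/
theorem ptGrp_preserves_lat {g : Orth d} (hg : g ∈ ptGrp 𝒢) {v : Vec d}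
    (hv : v ∈ lat 𝒢) : g v ∈ lat 𝒢 := by
  obtain ⟨p, hp, rfl⟩ := hg
  have hv' : (⟨v,1⟩ : Euc d) ∈ 𝒢 := hv
  have h := mul_mem (mul_mem hp hv') (inv_mem hp)
  have e : p * (⟨v, 1⟩ : Euc d) * p⁻¹ = ⟨(proj d p) v, 1⟩ := by
    ext : 1
    · show (p.t + p.g v) + (p.g * 1) (-(p.g⁻¹ p.t)) = p.g v
      simp
    · show (p.g * 1) * p.g⁻¹ = 1
      simp
  rwa [e] at h


/-- The factor set `ν(g,h) := sec(g) + g·sec(h) − sec(gh)` determined by a section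
`sec : G → ℝ^d` of a space group. -/
def nu {d : ℕ} (sec : Orth d → Vec d) (g h : Orth d) : Vec d :=
  sec g + g (sec h) - sec (g * h)

variable {d : ℕ} (𝒢 : Subgroup (Euc d))

/-- The factor set of a space group takes values in the translation lattice. -/
theorem nu_mem_lat (sec : Orth d → Vec d)
    (hsec : ∀ g ∈ ptGrp 𝒢, (⟨sec g, g⟩ : Euc d) ∈ 𝒢)
    {g h : Orth d} (hg : g ∈ ptGrp 𝒢) (hh : h ∈ ptGrp 𝒢) : nu sec g h ∈ lat 𝒢 := by
  have h1 := hsec g hg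
  have h2 := hsec h hh
  have h3 := hsec (g * h) (mul_mem hg hh)
  have hm := mul_mem (mul_mem h1 h2) (inv_mem h3)
  have e : (⟨sec g, g⟩ : Euc d) * (⟨sec h, h⟩ : Euc d) * ((⟨sec (g * h), g * h⟩ : Euc d))⁻¹
      = (⟨nu sec g h, 1⟩ : Euc d) := by
    ext : 1
    · show (sec g + g (sec h)) + (g * h) (-((g * h)⁻¹ (sec (g * h)))) = nu sec g h
      simp [nu, sub_eq_add_neg]
    · show (g * h) * (g * h)⁻¹ = 1
      group
  rwa [e] at hm

/-- The dual action of the point group `G` on the Pontryagin dual `Π̂` of the translation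
lattice: `(g·χ)(n) := χ(g⁻¹·n)`. -/
def dualAct {g : Orth d} (hg : g ∈ ptGrp 𝒢) (χ : AddChar ↥(lat 𝒢) Circle) :
    AddChar ↥(lat 𝒢) Circle where
  toFun n := χ ⟨g⁻¹ (n : Vec d), ptGrp_preserves_lat 𝒢 (inv_mem hg) n.2⟩
  map_zero_eq_one' := by
    have e : (⟨g⁻¹ ((0 : ↥(lat 𝒢)) : Vec d), ptGrp_preserves_lat 𝒢 (inv_mem hg)
        (0 : ↥(lat 𝒢)).2⟩ : ↥(lat 𝒢)) = 0 := by
      apply Subtype.ext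
      simp
    show χ ⟨g⁻¹ ((0 : ↥(lat 𝒢)) : Vec d), ptGrp_preserves_lat 𝒢 (inv_mem hg)
        (0 : ↥(lat 𝒢)).2⟩ = 1
    rw [e, AddChar.map_zero_eq_one]
  map_add_eq_mul' a b := by
    have e : (⟨g⁻¹ ((a + b : ↥(lat 𝒢)) : Vec d), ptGrp_preserves_lat 𝒢 (inv_mem hg)
          (a + b : ↥(lat 𝒢)).2⟩ : ↥(lat 𝒢)) =
        ⟨g⁻¹ (a : Vec d), ptGrp_preserves_lat 𝒢 (inv_mem hg) a.2⟩ +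
        ⟨g⁻¹ (b : Vec d), ptGrp_preserves_lat 𝒢 (inv_mem hg) b.2⟩ := by
      apply Subtype.ext
      simp
    show χ ⟨g⁻¹ ((a + b : ↥(lat 𝒢)) : Vec d), ptGrp_preserves_lat 𝒢 (inv_mem hg)
        (a + b : ↥(lat 𝒢)).2⟩ =
      χ ⟨g⁻¹ (a : Vec d), ptGrp_preserves_lat 𝒢 (inv_mem hg) a.2⟩ *
      χ ⟨g⁻¹ (b : Vec d), ptGrp_preserves_lat 𝒢 (inv_mem hg) b.2⟩
    rw [e, AddChar.map_add_eq_mul]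

/-- The Fourier-transformed (dual) `2`-cocycle `τ_𝒢` on the Brillouin torus:
`τ_𝒢(g,h)(χ) := ((gh)·χ)(ν(g,h))`. -/
def tauApp (sec : Orth d → Vec d) (hsec : ∀ g ∈ ptGrp 𝒢, (⟨sec g, g⟩ : Euc d) ∈ 𝒢)
    {g h : Orth d} (hg : g ∈ ptGrp 𝒢) (hh : h ∈ ptGrp 𝒢)
    (χ : AddChar ↥(lat 𝒢) Circle) : Circle :=
  dualAct 𝒢 (mul_mem hg hh) χ ⟨nu sec g h, nu_mem_lat 𝒢 sec hsec hg hh⟩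

/-- The total space `ℝ^d × Π̂ × ℂ` of the (trivialized cover of the) Poincaré line
bundle over `ℝ^d/Π × Π̂`. -/
abbrev PoincareTotal (𝒢 : Subgroup (Euc d)) : Type _ :=
  Vec d × AddChar ↥(lat 𝒢) Circle × ℂ

/-- The `Π`-action `n·(x,χ,z) := (x+n, χ, χ(n)·z)` on `ℝ^d × Π̂ × ℂ` defining the
Poincaré line bundle `𝒫 = (ℝ^d × Π̂ × ℂ)/Π`. -/
def latAct (n : ↥(lat 𝒢)) (p : PoincareTotal 𝒢) : PoincareTotal 𝒢 :=
  (p.1 + (n : Vec d), p.2.1, ((p.2.1 n : Circle) : ℂ) * p.2.2)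

/-- The lifted `G`-action `γ̃(g)(x,χ,z) := (sec(g) + g·x, g·χ, z)` on `ℝ^d × Π̂ × ℂ`. -/
def gammaTilde (sec : Orth d → Vec d) {g : Orth d} (hg : g ∈ ptGrp 𝒢)
    (p : PoincareTotal 𝒢) : PoincareTotal 𝒢 :=
  (sec g + g p.1, dualAct 𝒢 hg p.2.1, p.2.2)

theorem dualAct_apply {g : Orth d} (hg : g ∈ ptGrp 𝒢) (χ : AddChar ↥(lat 𝒢) Circle)
    (n : ↥(lat 𝒢)) :
    dualAct 𝒢 hg χ n = χ ⟨g⁻¹ (n : Vec d), ptGrp_preserves_lat 𝒢 (inv_mem hg) n.2⟩ := rfl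

theorem dualAct_dualAct {g h : Orth d} (hg : g ∈ ptGrp 𝒢) (hh : h ∈ ptGrp 𝒢)
    (χ : AddChar ↥(lat 𝒢) Circle) :
    dualAct 𝒢 hg (dualAct 𝒢 hh χ) = dualAct 𝒢 (mul_mem hg hh) χ := by
  ext n
  simp only [dualAct_apply, mul_inv_rev]
  rfl

theorem sec_add_apply_sec_add_apply (sec : Orth d → Vec d) (g h : Orth d) (x : Vec d) :
    sec g + g (sec h + h x) = sec (g * h) + (g * h) x + nu sec g h := by
  rw [nu, map_add, LinearIsometryEquiv.coe_mul, Function.comp_apply]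
  abel

/-- Theorem 4.2, twisted cocycle part. For all `g, h` in the point
group and all `(x,χ,z) ∈ ℝ^d × Π̂ × ℂ`:
`γ̃(g)(γ̃(h)(x,χ,z)) = ν(g,h)·(γ̃(gh)(x, χ, τ_𝒢(g,h)(χ)⁻¹·z))`.
In other words, the maps `γ̃` descend to maps `γ(g)` of the Poincaré line bundle
`𝒫 = (ℝ^d × Π̂ × ℂ)/Π` satisfying `γ(g)∘γ(h) = τ_𝒢(g,h)⁻¹·γ(gh)`: a `G`-action twisted by
the pullback of the inverse dual cocycle `τ_𝒢⁻¹`. -/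
theorem poincare_bundle_twisted_action (d : ℕ) (𝒢 : Subgroup (Euc d))
    (sec : Orth d → Vec d) (hsec : ∀ g ∈ ptGrp 𝒢, (⟨sec g, g⟩ : Euc d) ∈ 𝒢)
    (g h : Orth d) (hg : g ∈ ptGrp 𝒢) (hh : h ∈ ptGrp 𝒢) (p : PoincareTotal 𝒢) :
    gammaTilde 𝒢 sec hg (gammaTilde 𝒢 sec hh p) =
      latAct 𝒢 ⟨nu sec g h, nu_mem_lat 𝒢 sec hsec hg hh⟩
        (gammaTilde 𝒢 sec (mul_mem hg hh)
          (p.1, p.2.1, (((tauApp 𝒢 sec hsec hg hh p.2.1)⁻¹ : Circle) : ℂ) * p.2.2)) := by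
  obtain ⟨x, χ, z⟩ := p
  refine Prod.ext (sec_add_apply_sec_add_apply sec g h x)
    (Prod.ext (dualAct_dualAct 𝒢 hg hh χ) ?_)
  -- the `Π`-action by `ν(g,h)` multiplies the fibre by `((gh)·χ)(ν(g,h)) = τ_𝒢(g,h)(χ)`
  show z = (tauApp 𝒢 sec hsec hg hh χ : ℂ) * (((tauApp 𝒢 sec hsec hg hh χ)⁻¹ : Circle) * z)
  rw [Circle.coe_inv, mul_inv_cancel_left₀ (Circle.coe_ne_zero _)]

end Cryst
end
end

section
/- Let D₂ = {1, σx, σy, r} ≅ ℤ/2 × ℤ/2 (with r = σx·σy), let T² = U(1) × U(1) with coordinates (u,v), and define τ : D₂ × D₂ → Map(T², U(1)) by τ(σx,σy) = τ(σx,r) = ((u,v) ↦ u⁻¹), τ(σy,σy) = τ(σy,r) = ((u,v) ↦ u), and τ(g,h) = 1 for all other pairs (the dual cocycle τ_pmg of the wallpaper group pmg). Let f : T² → T² be f(u,v) := (−u, v). Then for all g, h ∈ D₂ and all (u,v) ∈ T²: τ(g,h)(f(u,v)) = ζ(g,h) · τ(g,h)(u,v), where ζ : D₂ × D₂ → {±1}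 is given by ζ(σx,σy) = ζ(σx,r) = ζ(σy,σy) = ζ(σy,r) = −1 and ζ(g,h) = 1 otherwise; moreover ζ is a 2-cocycle for the trivial action that is not a 2-coboundary (e.g. ζ(σx,r) ≠ ζ(r,σx) with σx and r commuting). Thus pulling back τ_pmg along the equivariant torus automorphism (u,v) ↦ (−u,v) changes it by the nontrivial class ω. -/
/-!
Writing `τ(g,h)(u,v) = u^{n(g,h)}`, one has `ζ(g,h) = (−1)^{n(g,h)}`, so substituting `−u`
for `u` multiplies `τ(g,h)` by `ζ(g,h)`. Modulo 2 the exponent is the bilinear form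
`B(g,h) = (g₁ + g₂) h₂` on `(ℤ/2)²`; a bilinear form is a `2`-cocycle, and a coboundary
`m g · m h · m(g+h)⁻¹` is symmetric in `g, h` whereas `B(σx,r) ≠ B(r,σx)`.
-/

/-- The element `−1` of the circle group `U(1)`. -/
noncomputable def negOne : Circle :=
  ⟨-1, by norm_num [Submonoid.unitSphere, Metric.mem_sphere]⟩

/-- Exponent table of the dual cocycle `τ_pmg` of the wallpaper group `pmg` on the
Brillouin torus `T² = U(1) × U(1)`, for `D₂ = {1, σx, σy, r} ≅ ℤ/2 × ℤ/2` with
`σx = (1,0)`, `σy = (0,1)`, `r = σx·σy = (1,1)`: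
`τ(σx,σy) = τ(σx,r) = u⁻¹`, `τ(σy,σy) = τ(σy,r) = u`, and `τ(g,h) = 1` otherwise. -/
def tauExponent (g h : ZMod 2 × ZMod 2) : ℤ :=
  if g = (1, 0) ∧ (h = (0, 1) ∨ h = (1, 1)) then -1
  else if g = (0, 1) ∧ (h = (0, 1) ∨ h = (1, 1)) then 1
  else 0

/-- The dual cocycle `τ_pmg : D₂ × D₂ → Map(T², U(1))` of the wallpaper group `pmg`. -/
noncomputable def tauPmg (g h : ZMod 2 × ZMod 2) : Circle × Circle → Circle :=
  fun p => p.1 ^ tauExponent g h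

/-- The `{±1}`-valued `2`-cocycle `ζ`: `ζ(σx,σy) = ζ(σx,r) = ζ(σy,σy) = ζ(σy,r) = −1`
and `ζ(g,h) = 1` otherwise. -/
noncomputable def zetaPmg (g h : ZMod 2 × ZMod 2) : Circle :=
  if (g = (1, 0) ∨ g = (0, 1)) ∧ (h = (0, 1) ∨ h = (1, 1)) then negOne else 1

/-- The equivariant torus automorphism `f(u,v) := (−u, v)` of `T² = U(1) × U(1)`. -/
noncomputable def fMap : Circle × Circle → Circle × Circle :=
  fun p => (negOne * p.1, p.2)

section Coboundary

variable {A M : Type*} [AddCommMagma A] [CommGroup M]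

lemma coboundary_comm (m : A → M) (g h : A) :
    m g * m h * (m (g + h))⁻¹ = m h * m g * (m (h + g))⁻¹ := by
  rw [mul_comm (m g), add_comm]

lemma not_exists_coboundary_of_ne_swap {ζ : A → A → M} {a b : A} (hab : ζ a b ≠ ζ b a) :
    ¬ ∃ m : A → M, ∀ g h, ζ g h = m g * m h * (m (g + h))⁻¹ := by
  rintro ⟨m, hm⟩
  exact hab (by rw [hm, hm, coboundary_comm])

end Coboundary

lemma negOne_mul_self : negOne * negOne = 1 := by
  ext; change (-1 : ℂ) * -1 = 1; norm_num

lemma negOne_inv : negOne⁻¹ = negOne :=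
  inv_eq_of_mul_eq_one_right negOne_mul_self

lemma negOne_ne_one : negOne ≠ 1 := by
  intro h
  have : (-1 : ℂ) = 1 := congrArg Subtype.val h
  norm_num at this

lemma orderOf_negOne : orderOf negOne = 2 :=
  orderOf_eq_prime (by rw [sq, negOne_mul_self]) negOne_ne_one

lemma negOne_zpow_eq_zpow_iff {a b : ℤ} : negOne ^ a = negOne ^ b ↔ (a : ZMod 2) = b := by
  rw [zpow_eq_zpow_iff_modEq, orderOf_negOne, ZMod.intCast_eq_intCast_iff]

lemma intCast_tauExponent (g h : ZMod 2 × ZMod 2) :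
    (tauExponent g h : ZMod 2) = (g.1 + g.2) * h.2 := by
  revert g h
  decide

lemma zetaPmg_eq_zpow (g h : ZMod 2 × ZMod 2) : zetaPmg g h = negOne ^ tauExponent g h := by
  unfold zetaPmg tauExponent
  split_ifs <;> simp_all [negOne_inv]

lemma tauPmg_fMap (g h : ZMod 2 × ZMod 2) (p : Circle × Circle) :
    tauPmg g h (fMap p) = zetaPmg g h * tauPmg g h p := by
  rw [tauPmg, tauPmg, fMap, mul_zpow, zetaPmg_eq_zpow]

lemma zetaPmg_cocycle (g h k : ZMod 2 × ZMod 2) :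
    zetaPmg h k * zetaPmg g (h + k) = zetaPmg (g + h) k * zetaPmg g h := by
  simp only [zetaPmg_eq_zpow, ← zpow_add, negOne_zpow_eq_zpow_iff, Int.cast_add,
    intCast_tauExponent, Prod.fst_add, Prod.snd_add]
  ring

lemma zetaPmg_ne_swap :
    zetaPmg ((1 : ZMod 2), (0 : ZMod 2)) ((1 : ZMod 2), (1 : ZMod 2)) ≠
      zetaPmg ((1 : ZMod 2), (1 : ZMod 2)) ((1 : ZMod 2), (0 : ZMod 2)) := by
  rw [zetaPmg, zetaPmg, if_pos (by decide), if_neg (by decide)]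
  exact negOne_ne_one

/-- For the dual cocycle `τ_pmg` of the wallpaper group `pmg` on the
Brillouin torus `T² = U(1) × U(1)` and the automorphism `f(u,v) = (−u,v)`:
`τ(g,h)(f(u,v)) = ζ(g,h)·τ(g,h)(u,v)` for all `g, h ∈ D₂` and `(u,v) ∈ T²`, where `ζ` is
the indicated `{±1}`-valued function; moreover `ζ` is a `2`-cocycle for the trivial
action which is not a `2`-coboundary (e.g. `ζ(σx,r) ≠ ζ(r,σx)` although `σx` and `r`
commute). Thus pulling back `τ_pmg` along `(u,v) ↦ (−u,v)` changes it by the nontrivial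
class `ω`. -/
theorem pmg_dual_cocycle_shifts_by_omega :
    (∀ (g h : ZMod 2 × ZMod 2) (p : Circle × Circle),
      tauPmg g h (fMap p) = zetaPmg g h * tauPmg g h p) ∧
    (∀ g h k : ZMod 2 × ZMod 2,
      zetaPmg h k * zetaPmg g (h + k) = zetaPmg (g + h) k * zetaPmg g h) ∧
    (zetaPmg ((1 : ZMod 2), (0 : ZMod 2)) ((1 : ZMod 2), (1 : ZMod 2)) ≠
      zetaPmg ((1 : ZMod 2), (1 : ZMod 2)) ((1 : ZMod 2), (0 : ZMod 2))) ∧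
    (¬ ∃ m : ZMod 2 × ZMod 2 → Circle,
        ∀ g h : ZMod 2 × ZMod 2, zetaPmg g h = m g * m h * (m (g + h))⁻¹) :=
  ⟨tauPmg_fMap, zetaPmg_cocycle, zetaPmg_ne_swap, not_exists_coboundary_of_ne_swap zetaPmg_ne_swap⟩
end
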